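/- Let L be a nonzero Gaussian integer and s a Gaussian integer with 2·N(s) > N(L). Then s ∉ 𝓕(L), and consequently for any Gaussian integer x, the unique remainder of x modulo L lying in 𝓕(L) is different from s. (Hence an unauthorized coalition B with N(lcm(B)) < 2·N(s) never reconstructs the secret s by this procedure.) -/

import Mathlib

/-- The fundamental domain `𝓕(z)` of a Gaussian integer `z`:
the semi-open square `{ z(α + βi) : -1/2 < α ≤ 1/2, -1/2 < β ≤ 1/2 }` in `ℂ`. -/
def Fd (z : GaussianInt) : Set ℂ :=
  { w | ∃ α β : ℝ, w = (GaussianInt.toComplex z) * (α + β * Complex.I) ∧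
      -(1/2 : ℝ) < α ∧ α ≤ 1/2 ∧ -(1/2 : ℝ) < β ∧ β ≤ 1/2 }

theorem two_mul_normSq_le_of_mem_Fd {z : GaussianInt} {w : ℂ} (hw : w ∈ Fd z) :
    2 * Complex.normSq w ≤ Complex.normSq (GaussianInt.toComplex z) := by
  obtain ⟨α, β, rfl, hα₁, hα₂, hβ₁, hβ₂⟩ := hw
  have hsq : α ^ 2 + β ^ 2 ≤ 1 / 2 := by nlinarith
  rw [Complex.normSq_mul, Complex.normSq_add_mul_I]
  nlinarith [Complex.normSq_nonneg (GaussianInt.toComplex z)]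

theorem GaussianInt.two_mul_norm_le_of_mem_Fd {z w : GaussianInt}
    (hw : GaussianInt.toComplex w ∈ Fd z) : 2 * w.norm ≤ z.norm := by
  have h := two_mul_normSq_le_of_mem_Fd hw
  rw [← GaussianInt.intCast_real_norm, ← GaussianInt.intCast_real_norm] at h
  exact_mod_cast h

theorem secret_not_recovered_general (L s : GaussianInt)
    (hs : L.norm < 2 * s.norm) :
    GaussianInt.toComplex s ∉ Fd L ∧
      ∀ x r : GaussianInt, GaussianInt.toComplex r ∈ Fd L → L ∣ x - r → r ≠ s := by
  have hs_notMem : GaussianInt.toComplex s ∉ Fd L := fun h =>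
    (GaussianInt.two_mul_norm_le_of_mem_Fd h).not_gt hs
  refine ⟨hs_notMem, ?_⟩
  rintro x r hr - rfl
  exact hs_notMem hr

/-- If `2 * N(s) > N(L)`, then `s ∉ 𝓕(L)`, and consequently the remainder lying in
`𝓕(L)` of any Gaussian integer `x` modulo `L` is different from `s`: an unauthorized
coalition never reconstructs the secret by this procedure. -/
theorem secret_not_recovered (L s : GaussianInt) (hL : L ≠ 0)
    (hs : L.norm < 2 * s.norm) :
    GaussianInt.toComplex s ∉ Fd L ∧
      ∀ x r : GaussianInt, GaussianInt.toComplex r ∈ Fd L → L ∣ x - r → r ≠ s :=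
  secret_not_recovered_general L s hs
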